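/- Let m ≥ 4, k ∈ {3,…,m−1}, and let C ⊆ {0,1,…,2^m−1} be a set of 2^{k+1}−3 consecutive integers. Then every gap of the set φ₂(C) ∪ {0,1} is at most 1/2^k; that is, whenever t₁ < t₂ are elements of φ₂(C) ∪ {0,1} with no element of φ₂(C) ∪ {0,1} strictly between them, then t₂ − t₁ ≤ 1/2^k. -/
import Mathlib


/-- The `i`-th digit (1-based) of `n` in base `b`, with the convention that the
`0`-th digit is `0`. -/
def nthDigit (b n i : ℕ) : ℕ := if i = 0 then 0 else n / b ^ (i - 1) % b
/-- The radical-inverse (digit-reversal) function in base `b`, using `m` digits: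
`φ_b(n) = e₁/b + e₂/b² + ⋯ + e_m/b^m`. -/
noncomputable def radInv (b m n : ℕ) : ℝ :=
  ∑ i ∈ Finset.Icc 1 m, (nthDigit b n i : ℝ) / (b : ℝ) ^ i


/-- Binary reversal of the low `K` bits of `n`. -/
def brev : ℕ → ℕ → ℕ
  | 0, _ => 0
  | (K+1), n => n % 2 * 2 ^ K + brev K (n / 2)

lemma brev_succ (K n : ℕ) : brev (K+1) n = n % 2 * 2 ^ K + brev K (n / 2) := rfl

lemma brev_lt (K n : ℕ) : brev K n < 2 ^ K := by
  induction K generalizing n with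
  | zero => simp [brev]
  | succ K ih =>
    have h := ih (n / 2)
    have h2 : n % 2 ≤ 1 := by omega
    have : n % 2 * 2 ^ K ≤ 2 ^ K := by
      calc n % 2 * 2 ^ K ≤ 1 * 2 ^ K := Nat.mul_le_mul_right _ h2
      _ = 2 ^ K := one_mul _
    simp only [brev, pow_succ]
    omega

lemma brev_zero (K : ℕ) : brev K 0 = 0 := by
  induction K with
  | zero => rfl
  | succ K ih => simp [brev, ih]

lemma brev_low (K w : ℕ) (h : w < 2 ^ K) : brev (K+1) w = 2 * brev K w := by
  induction K generalizing w with
  | zero => interval_cases w <;> rfl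
  | succ K ih =>
    have hw2 : w / 2 < 2 ^ K := by
      have : 2 ^ (K+1) = 2 * 2 ^ K := by ring
      omega
    rw [brev_succ (K+1) w, ih (w/2) hw2, brev_succ K w]
    ring

lemma brev_high (K w : ℕ) (h : w < 2 ^ K) : brev (K+1) (2 ^ K + w) = 2 * brev K w + 1 := by
  induction K generalizing w with
  | zero => interval_cases w <;> rfl
  | succ K ih =>
    have hw2 : w / 2 < 2 ^ K := by
      have : 2 ^ (K+1) = 2 * 2 ^ K := by ring
      omega
    have hmod : (2 ^ (K+1) + w) % 2 = w % 2 := by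
      have : 2 ^ (K+1) = 2 * 2 ^ K := by ring
      omega
    have hdiv : (2 ^ (K+1) + w) / 2 = 2 ^ K + w / 2 := by
      have : 2 ^ (K+1) = 2 * 2 ^ K := by ring
      omega
    rw [brev_succ (K+1) _, hmod, hdiv, ih (w/2) hw2, brev_succ K w]
    ring

lemma brev_invol (K n : ℕ) (h : n < 2 ^ K) : brev K (brev K n) = n := by
  induction K generalizing n with
  | zero =>
    have : n = 0 := by simpa using h
    simp [this, brev]
  | succ K ih =>
    have hz : n / 2 < 2 ^ K := by
      have : 2 ^ (K+1) = 2 * 2 ^ K := by ring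
      omega
    have hw : brev K (n / 2) < 2 ^ K := brev_lt K _
    rcases Nat.even_or_odd n with he | ho
    · have hb : n % 2 = 0 := Nat.even_iff.mp he
      have h1 : brev (K+1) n = brev K (n / 2) := by rw [brev_succ, hb]; ring
      rw [h1, brev_low K _ hw, ih _ hz]
      omega
    · have hb : n % 2 = 1 := Nat.odd_iff.mp ho
      have h1 : brev (K+1) n = 2 ^ K + brev K (n / 2) := by rw [brev_succ, hb]; ring
      rw [h1, brev_high K _ hw, ih _ hz]
      omega

lemma brev_split (K : ℕ) : ∀ m n : ℕ, K ≤ m →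
    brev m n = brev K (n % 2 ^ K) * 2 ^ (m - K) + brev (m - K) (n / 2 ^ K) := by
  induction K with
  | zero => intro m n _; simp [brev, Nat.mod_one]
  | succ K ih =>
    intro m n hKm
    obtain ⟨m', rfl⟩ : ∃ m', m = m' + 1 := ⟨m - 1, by omega⟩
    have hKm' : K ≤ m' := by omega
    have e1 : (n % 2 ^ (K+1)) % 2 = n % 2 :=
      Nat.mod_mod_of_dvd n (dvd_pow_self 2 (by omega))
    have e2 : (n % 2 ^ (K+1)) / 2 = (n / 2) % 2 ^ K := by
      have h : 2 ^ (K+1) = 2 * 2 ^ K := by ring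
      rw [h]
      exact Nat.mod_mul_right_div_self n 2 (2^K)
    have e3 : n / 2 ^ (K+1) = (n / 2) / 2 ^ K := by
      rw [Nat.div_div_eq_div_mul]
      congr 1
      ring
    have e4 : m' + 1 - (K + 1) = m' - K := by omega
    have e5 : 2 ^ K * 2 ^ (m' - K) = 2 ^ m' := by
      rw [← pow_add]; congr 1; omega
    rw [brev_succ m' n, e4, brev_succ K _, e1, e2, e3, ih m' (n/2) hKm', ← e5]
    ring

lemma brev_even_lt (K n : ℕ) (h : n % 2 = 0) : brev (K+1) n < 2 ^ K := by
  rw [brev_succ, h]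
  simpa using brev_lt K (n/2)

lemma brev_odd_ge (K n : ℕ) (h : n % 2 = 1) : 2 ^ K ≤ brev (K+1) n := by
  rw [brev_succ, h]
  omega

lemma brev_mod_of_lt (K n : ℕ) (h : n < 2 ^ K) : brev (K+1) n % 2 = 0 := by
  rw [brev_low K n h]; omega

lemma brev_mod_of_ge (K n : ℕ) (h1 : 2 ^ K ≤ n) (h2 : n < 2 ^ (K+1)) :
    brev (K+1) n % 2 = 1 := by
  obtain ⟨w, rfl⟩ : ∃ w, n = 2 ^ K + w := ⟨n - 2^K, by omega⟩
  have hw : w < 2 ^ K := by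
    have : 2 ^ (K+1) = 2 * 2 ^ K := by ring
    omega
  rw [brev_high K w hw]
  omega

lemma brev_pow (K : ℕ) (h : 1 ≤ K) : brev K (2 ^ (K-1)) = 1 := by
  obtain ⟨K', rfl⟩ : ∃ K', K = K' + 1 := ⟨K - 1, by omega⟩
  have := brev_high K' 0 (by positivity)
  simpa [brev_zero] using this

lemma brev_pred (K : ℕ) (h : 1 ≤ K) : brev K (2 ^ (K-1) - 1) = 2 ^ K - 2 := by
  induction K with
  | zero => omega
  | succ K ih =>
    rcases Nat.eq_zero_or_pos K with rfl | hK
    · simp [brev]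
    · have h2 : (2:ℕ) ^ K = 2 * 2 ^ (K-1) := by
        rw [← pow_succ']
        congr 1
        omega
      have h5 : (1:ℕ) ≤ 2 ^ (K-1) := Nat.one_le_two_pow
      have hmod : (2 ^ (K+1-1) - 1) % 2 = 1 := by
        simp only [Nat.add_sub_cancel]
        omega
      have hdiv : (2 ^ (K+1-1) - 1) / 2 = 2 ^ (K-1) - 1 := by
        simp only [Nat.add_sub_cancel]
        omega
      rw [brev_succ, hmod, hdiv, ih hK]
      have h3 : (2:ℕ) ^ (K+1) = 2 * 2 ^ K := by ring
      have h4 : (2:ℕ) ≤ 2 ^ K := by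
        calc (2:ℕ) = 2^1 := rfl
        _ ≤ 2 ^ K := Nat.pow_le_pow_right (by norm_num) hK
      omega

lemma brev_adj1 (K x : ℕ) (hK : 3 ≤ K) (hx : x < 2 ^ K) :
    brev K ((x+1) % 2 ^ K) ≠ brev K x + 1 ∧ brev K x ≠ brev K ((x+1) % 2 ^ K) + 1 := by
  obtain ⟨K', rfl⟩ : ∃ K', K = K' + 1 := ⟨K - 1, by omega⟩
  have hK' : 2 ≤ K' := by omega
  have hE : (4:ℕ) ≤ 2 ^ K' := by
    calc (4:ℕ) = 2^2 := rfl
    _ ≤ 2 ^ K' := Nat.pow_le_pow_right (by norm_num) hK'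
  have hEE : (2:ℕ) ^ (K'+1) = 2 * 2 ^ K' := by ring
  set x' := (x+1) % 2 ^ (K'+1) with hx'def
  have hx' : x' < 2 ^ (K'+1) := Nat.mod_lt _ (by positivity)
  have hx'val : x' = x + 1 ∨ (x = 2 ^ (K'+1) - 1 ∧ x' = 0) := by
    rcases Nat.lt_or_ge (x+1) (2 ^ (K'+1)) with hc | hc
    · left; exact Nat.mod_eq_of_lt hc
    · right
      refine ⟨by omega, ?_⟩
      rw [hx'def, show x + 1 = 2 ^ (K'+1) by omega, Nat.mod_self]
  have hpar : x' % 2 ≠ x % 2 := by rcases hx'val with h | ⟨h1, h2⟩ <;> omega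
  have hP1 : (2:ℕ)^K' - 1 = 2^((K'+1)-1) - 1 := by norm_num
  have hP2 : (2:ℕ)^K' = 2^((K'+1)-1) := by norm_num
  rcases Nat.mod_two_eq_zero_or_one x with hb | hb
  · have hb' : x' % 2 = 1 := by omega
    have hA : brev (K'+1) x < 2 ^ K' := brev_even_lt K' x hb
    have hA' : 2 ^ K' ≤ brev (K'+1) x' := brev_odd_ge K' x' hb'
    constructor
    · intro hadj
      have h1 : brev (K'+1) x = 2 ^ K' - 1 := by omega
      have h2 : brev (K'+1) x' = 2 ^ K' := by omega
      have hxe : x = 2 ^ (K'+1) - 2 := by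
        have hi := brev_invol (K'+1) x hx
        rw [h1] at hi
        rw [← hi, hP1, brev_pred (K'+1) (by omega)]
      have hx'e : x' = 1 := by
        have hi := brev_invol (K'+1) x' hx'
        rw [h2] at hi
        rw [← hi, hP2, brev_pow (K'+1) (by omega)]
      rcases hx'val with h | ⟨h1', h2'⟩ <;> omega
    · intro hadj
      omega
  · have hb' : x' % 2 = 0 := by omega
    have hA : 2 ^ K' ≤ brev (K'+1) x := brev_odd_ge K' x hb
    have hA' : brev (K'+1) x' < 2 ^ K' := brev_even_lt K' x' hb'
    constructor
    · intro hadj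
      omega
    · intro hadj
      have h1 : brev (K'+1) x' = 2 ^ K' - 1 := by omega
      have h2 : brev (K'+1) x = 2 ^ K' := by omega
      have hx'e : x' = 2 ^ (K'+1) - 2 := by
        have hi := brev_invol (K'+1) x' hx'
        rw [h1] at hi
        rw [← hi, hP1, brev_pred (K'+1) (by omega)]
      have hxe : x = 1 := by
        have hi := brev_invol (K'+1) x hx
        rw [h2] at hi
        rw [← hi, hP2, brev_pow (K'+1) (by omega)]
      rcases hx'val with h | ⟨h1', h2'⟩ <;> omega

lemma brev_adj2 (K x : ℕ) (hK : 4 ≤ K) (hx : x < 2 ^ K) :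
    brev K ((x+2) % 2 ^ K) ≠ brev K x + 1 ∧ brev K x ≠ brev K ((x+2) % 2 ^ K) + 1 := by
  obtain ⟨K', rfl⟩ : ∃ K', K = K' + 1 := ⟨K - 1, by omega⟩
  have hK' : 3 ≤ K' := by omega
  have hEE : (2:ℕ) ^ (K'+1) = 2 * 2 ^ K' := by ring
  have hEpos : (0:ℕ) < 2 ^ K' := by positivity
  set b := x % 2 with hbdef
  set z := x / 2 with hzdef
  have hxz : x = 2 * z + b := by omega
  have hz : z < 2 ^ K' := by omega
  set x' := (x+2) % 2 ^ (K'+1) with hx'def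
  set z' := (z+1) % 2 ^ K' with hz'def
  have hx'z : x' = 2 * z' + b := by
    rcases Nat.lt_or_ge (x+2) (2 ^ (K'+1)) with hc | hc
    · have e1 : x' = x + 2 := Nat.mod_eq_of_lt hc
      have e2 : z' = z + 1 := Nat.mod_eq_of_lt (by omega)
      omega
    · have e1 : x' = x + 2 - 2 ^ (K'+1) := by
        rw [hx'def, Nat.mod_eq_sub_mod hc, Nat.mod_eq_of_lt (by omega)]
      have e2 : z' = z + 1 - 2 ^ K' := by
        rw [hz'def, Nat.mod_eq_sub_mod (by omega), Nat.mod_eq_of_lt (by omega)]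
      omega
    -- x' = 2z' + b
  have hb2 : b < 2 := by omega
  have hx'm : x' % 2 = b := by omega
  have hx'd : x' / 2 = z' := by omega
  have hxm : x % 2 = b := rfl
  have hxd : x / 2 = z := rfl
  have e1 : brev (K'+1) x = b * 2 ^ K' + brev K' z := by rw [brev_succ, hxm, hxd]
  have e2 : brev (K'+1) x' = b * 2 ^ K' + brev K' z' := by rw [brev_succ, hx'm, hx'd]
  have hrec := brev_adj1 K' z hK' hz
  rw [← hz'def] at hrec
  constructor
  · intro hadj
    rw [e1, e2] at hadj
    exact hrec.1 (by omega)
  · intro hadj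
    rw [e1, e2] at hadj
    exact hrec.2 (by omega)

lemma radInv_eq_brev (m : ℕ) : ∀ n : ℕ, radInv 2 m n = (brev m n : ℝ) / 2 ^ m := by
  induction m with
  | zero =>
    intro n
    simp [radInv, show brev 0 n = 0 from rfl]
  | succ m ih =>
    intro n
    have hsplit : Finset.Icc 1 (m+1) = insert 1 (Finset.Icc 2 (m+1)) := by
      ext i; simp [Finset.mem_Icc, Finset.mem_insert]; omega
    have hnot : (1:ℕ) ∉ Finset.Icc 2 (m+1) := by simp
    have hmap : Finset.Icc 2 (m+1) = (Finset.Icc 1 m).map (addRightEmbedding 1) := by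
      rw [Finset.map_add_right_Icc]
    rw [radInv, hsplit, Finset.sum_insert hnot, hmap, Finset.sum_map]
    simp only [Nat.cast_ofNat]
    have hterm1 : (nthDigit 2 n 1 : ℝ) / (2:ℝ)^1 = (n % 2 : ℕ) / 2 := by
      simp [nthDigit]
    have hterm : ∀ i ∈ Finset.Icc 1 m,
        (nthDigit 2 n (addRightEmbedding 1 i) : ℝ) / (2:ℝ) ^ (addRightEmbedding 1 i)
          = ((nthDigit 2 (n/2) i : ℝ) / (2:ℝ) ^ i) / 2 := by
      intro i hi
      simp only [Finset.mem_Icc] at hi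
      have h1 : addRightEmbedding 1 i = i + 1 := rfl
      have h2 : nthDigit 2 n (i+1) = nthDigit 2 (n/2) i := by
        simp only [nthDigit, if_neg (by omega : ¬ i + 1 = 0), if_neg (by omega : ¬ i = 0),
          Nat.add_sub_cancel]
        rw [Nat.div_div_eq_div_mul]
        congr 2
        rw [← pow_succ']
        congr 1
        omega
      rw [h1, h2]
      rw [pow_succ]
      ring
    rw [Finset.sum_congr rfl hterm, ← Finset.sum_div]
    have hr : ∑ i ∈ Finset.Icc 1 m, (nthDigit 2 (n/2) i : ℝ) / (2:ℝ) ^ i = radInv 2 m (n/2) := by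
      rw [radInv]
      norm_num
    rw [hr, ih (n/2), hterm1, brev_succ]
    have h2m : ((2:ℝ))^(m+1) = 2^m * 2 := by ring
    push_cast
    field_simp
    ring


/-- `y` is one of the three missing residues mod `2^K` for the block starting at `a`. -/
def isMissing (K a y : ℕ) : Prop := ∃ e, 1 ≤ e ∧ e ≤ 3 ∧ (y + e) % 2 ^ K = a % 2 ^ K

lemma side_lemma (K a y : ℕ) (hy : y < a % 2 ^ K) (hnb : ¬ isMissing K a y) :
    y + 4 ≤ a % 2 ^ K := by
  have hPpos : 0 < 2 ^ K := by positivity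
  by_contra h
  apply hnb
  refine ⟨a % 2 ^ K - y, by omega, by omega, ?_⟩
  rw [show y + (a % 2 ^ K - y) = a % 2 ^ K by omega]
  exact Nat.mod_eq_of_lt (Nat.mod_lt _ hPpos)

lemma elem_facts (K a n : ℕ) (hK : 4 ≤ K) (h1 : a ≤ n) (h2 : n < a + (2 ^ K - 3)) :
    ¬ isMissing K a (n % 2 ^ K) ∧
    ((a % 2 ^ K ≤ n % 2 ^ K ∧ n / 2 ^ K = a / 2 ^ K) ∨
      (n % 2 ^ K < a % 2 ^ K ∧ n / 2 ^ K = a / 2 ^ K + 1)) := by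
  set P := 2 ^ K with hP
  have hPpos : 0 < P := by positivity
  have hP16 : 16 ≤ P := by
    calc (16:ℕ) = 2 ^ 4 := by norm_num
    _ ≤ 2 ^ K := Nat.pow_le_pow_right (by norm_num) hK
  set r := n % P with hrdef
  set ρ := a % P with hρdef
  set u := n / P with hudef
  set A := a / P with hAdef
  obtain ⟨W, hW⟩ : ∃ W, P * A = W := ⟨_, rfl⟩
  have hn : P * u + r = n := Nat.div_add_mod n P
  have ha' : W + ρ = a := by rw [← hW]; exact Nat.div_add_mod a P
  have hr : r < P := Nat.mod_lt _ hPpos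
  have hρ : ρ < P := Nat.mod_lt _ hPpos
  have hu1 : A ≤ u := Nat.div_le_div_right h1
  have hu2 : u < A + 2 := by
    apply Nat.div_lt_of_lt_mul
    have he : P * (A + 2) = W + 2 * P := by rw [← hW]; ring
    rw [he]
    omega
  have hun : (u = A ∧ W + r = n) ∨ (u = A + 1 ∧ W + P + r = n) := by
    rcases (by omega : u = A ∨ u = A + 1) with h | h
    · left
      refine ⟨h, ?_⟩
      rw [← hn, h, hW]
    · right
      refine ⟨h, ?_⟩
      rw [← hn, h]
      rw [← hW]
      ring
  constructor
  · rintro ⟨e, he1, he3, hemod0⟩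
    have hemod : (r + e) % P = ρ := hemod0
    have hmm : ρ = r + e ∨ (P ≤ r + e ∧ ρ + P = r + e) := by
      rcases Nat.lt_or_ge (r + e) P with hc | hc
      · left
        rw [← hemod, Nat.mod_eq_of_lt hc]
      · right
        refine ⟨hc, ?_⟩
        have : (r + e) % P = r + e - P := by
          rw [Nat.mod_eq_sub_mod hc, Nat.mod_eq_of_lt (by omega)]
        omega
    omega
  · omega

lemma exists_elem (K a y : ℕ) (hK : 4 ≤ K) (hy : y < 2 ^ K)
    (hnb : ¬ isMissing K a y) :
    ∃ n, (a ≤ n ∧ n < a + (2 ^ K - 3)) ∧ n % 2 ^ K = y ∧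
      n / 2 ^ K = (if a % 2 ^ K ≤ y then a / 2 ^ K else a / 2 ^ K + 1) := by
  set P := 2 ^ K with hP
  have hPpos : 0 < P := by positivity
  have hP16 : 16 ≤ P := by
    calc (16:ℕ) = 2 ^ 4 := by norm_num
    _ ≤ 2 ^ K := Nat.pow_le_pow_right (by norm_num) hK
  set ρ := a % P with hρdef
  set A := a / P with hAdef
  have ha' : P * A + ρ = a := Nat.div_add_mod a P
  have hρ : ρ < P := Nat.mod_lt _ hPpos
  by_cases hc : ρ ≤ y
  · refine ⟨P * A + y, ⟨by omega, ?_⟩, ?_, ?_⟩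
    · have hylt : y + 3 < ρ + P := by
        by_contra hcon
        apply hnb
        refine ⟨ρ + P - y, by omega, by omega, ?_⟩
        rw [show y + (ρ + P - y) = ρ + P by omega, Nat.add_mod_right, Nat.mod_eq_of_lt hρ]
      omega
    · rw [Nat.mul_add_mod, Nat.mod_eq_of_lt hy]
    · rw [Nat.mul_add_div hPpos, Nat.div_eq_of_lt hy, if_pos hc]
      omega
  · push_neg at hc
    have hside : y + 4 ≤ ρ := side_lemma K a y hc hnb
    have hW2 : P * (A + 1) = P * A + P := by ring
    refine ⟨P * (A + 1) + y, ⟨by omega, by omega⟩, ?_, ?_⟩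
    · rw [Nat.mul_add_mod, Nat.mod_eq_of_lt hy]
    · rw [Nat.mul_add_div hPpos, Nat.div_eq_of_lt hy, if_neg (by omega)]

lemma key_lemma (m K a : ℕ) (hK : 4 ≤ K) (hKm : K ≤ m) (ha : a + (2 ^ K - 3) ≤ 2 ^ m)
    (B : ℕ) (hB : B = 0 ∨ ∃ n, (a ≤ n ∧ n < a + (2 ^ K - 3)) ∧ brev m n = B) :
    ∃ B', (B' = 2 ^ m ∨ ∃ n', (a ≤ n' ∧ n' < a + (2 ^ K - 3)) ∧ brev m n' = B') ∧
      B < B' ∧ B' ≤ B + 2 * 2 ^ (m - K) := by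
  obtain ⟨K', hKK⟩ : ∃ K', K = K' + 1 := ⟨K - 1, by omega⟩
  have hPQ : 2 ^ K * 2 ^ (m - K) = 2 ^ m := by
    rw [← pow_add]
    congr 1
    omega
  have hPpos : 0 < 2 ^ K := by positivity
  have hQpos : 0 < 2 ^ (m - K) := by positivity
  have hP16 : 16 ≤ 2 ^ K := by
    calc (16:ℕ) = 2 ^ 4 := by norm_num
    _ ≤ 2 ^ K := Nat.pow_le_pow_right (by norm_num) hK
  have hE2 : 2 ^ K = 2 * 2 ^ K' := by rw [hKK]; ring
  have hE8 : 8 ≤ 2 ^ K' := by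
    calc (8:ℕ) = 2 ^ 3 := by norm_num
    _ ≤ 2 ^ K' := Nat.pow_le_pow_right (by norm_num) (by omega)
  have hρ : a % 2 ^ K < 2 ^ K := Nat.mod_lt _ hPpos
  have hEP : 2 ^ (K - 1) = 2 ^ K' := by rw [hKK]; simp
  rcases hB with rfl | ⟨n, hnC, rfl⟩
  · -- B = 0
    by_cases h1b : isMissing K a (2 ^ (K - 1))
    · -- residue of position 1 is missing; use residue 0
      obtain ⟨e₁, h11, h13, h1m⟩ := h1b
      rw [hEP] at h1m
      have hhalf : 2 ^ K' + e₁ < 2 ^ K := by omega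
      have hρval : a % 2 ^ K = 2 ^ K' + e₁ := by
        rw [← h1m, Nat.mod_eq_of_lt hhalf]
      have h0nb : ¬ isMissing K a 0 := by
        rintro ⟨e₂, h21, h23, h2m⟩
        rw [Nat.mod_eq_of_lt (by omega : 0 + e₂ < 2 ^ K)] at h2m
        omega
      obtain ⟨n₀, hn₀C, hn₀r, hn₀d⟩ := exists_elem K a 0 hK hPpos h0nb
      have hd : n₀ / 2 ^ K = a / 2 ^ K + 1 := by
        rw [hn₀d, if_neg (by omega)]
      have hsplit : brev m n₀ = brev (m - K) (a / 2 ^ K + 1) := by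
        rw [brev_split K m n₀ hKm, hn₀r, hd, brev_zero]
        ring
      have hn₀val : n₀ = 2 ^ K * (a / 2 ^ K + 1) := by
        have h := Nat.div_add_mod n₀ (2 ^ K)
        rw [hd, hn₀r] at h
        omega
      have hA1 : a / 2 ^ K + 1 < 2 ^ (m - K) := by
        have h1 : 2 ^ K * (a / 2 ^ K + 1) < 2 ^ K * 2 ^ (m - K) := by
          rw [hPQ, ← hn₀val]
          omega
        exact Nat.lt_of_mul_lt_mul_left h1
      have hpos : 0 < brev (m - K) (a / 2 ^ K + 1) := by
        rcases Nat.eq_zero_or_pos (brev (m - K) (a / 2 ^ K + 1)) with h0 | h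
        · exfalso
          have h2 := brev_invol (m - K) (a / 2 ^ K + 1) hA1
          rw [h0, brev_zero] at h2
          exact Nat.succ_ne_zero _ h2.symm
        · exact h
      have hlt := brev_lt (m - K) (a / 2 ^ K + 1)
      refine ⟨brev m n₀, Or.inr ⟨n₀, hn₀C, rfl⟩, ?_, ?_⟩
      · rw [hsplit]; omega
      · rw [hsplit]; omega
    · -- residue of position 1 is present
      obtain ⟨n₁, hn₁C, hn₁r, _⟩ := exists_elem K a (2 ^ (K - 1)) hK (by omega) h1b
      have hsplit : brev m n₁ = 2 ^ (m - K) + brev (m - K) (n₁ / 2 ^ K) := by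
        rw [brev_split K m n₁ hKm, hn₁r, brev_pow K (by omega)]
        ring
      have hd' := brev_lt (m - K) (n₁ / 2 ^ K)
      refine ⟨brev m n₁, Or.inr ⟨n₁, hn₁C, rfl⟩, ?_, ?_⟩
      · rw [hsplit]; omega
      · rw [hsplit]; omega
  · -- B = brev m n for n in the block
    obtain ⟨hnb, hdisj⟩ := elem_facts K a n hK hnC.1 hnC.2
    have hsplitn : brev m n = brev K (n % 2 ^ K) * 2 ^ (m - K) + brev (m - K) (n / 2 ^ K) :=
      brev_split K m n hKm
    have hr : n % 2 ^ K < 2 ^ K := Nat.mod_lt _ hPpos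
    have hinvr : brev K (brev K (n % 2 ^ K)) = n % 2 ^ K := brev_invol K _ hr
    set r := n % 2 ^ K with hrdef
    set j := brev K r with hjdef
    set d := brev (m - K) (n / 2 ^ K) with hddef
    have hj : j < 2 ^ K := brev_lt K r
    have hd : d < 2 ^ (m - K) := brev_lt (m - K) _
    by_cases hj1 : j + 1 = 2 ^ K
    · have h1 : j * 2 ^ (m - K) + 2 ^ (m - K) = 2 ^ m := by
        rw [← hPQ, ← hj1]; ring
      exact ⟨2 ^ m, Or.inl rfl, by rw [hsplitn]; omega, by rw [hsplitn]; omega⟩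
    · have hj1' : j + 1 < 2 ^ K := by omega
      have hinvs : brev K (brev K (j + 1)) = j + 1 := brev_invol K (j + 1) hj1'
      set s := brev K (j + 1) with hsdef
      have hs : s < 2 ^ K := brev_lt K (j + 1)
      by_cases hsb : isMissing K a s
      · by_cases hj2 : j + 2 = 2 ^ K
        · have h1 : j * 2 ^ (m - K) + 2 * 2 ^ (m - K) = 2 ^ m := by
            rw [← hPQ, ← hj2]; ring
          exact ⟨2 ^ m, Or.inl rfl, by rw [hsplitn]; omega, by rw [hsplitn]; omega⟩
        · have hj2' : j + 2 < 2 ^ K := by omega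
          have hinvy₂ : brev K (brev K (j + 2)) = j + 2 := brev_invol K (j + 2) hj2'
          set y₂ := brev K (j + 2) with hy2def
          have hy₂ : y₂ < 2 ^ K := brev_lt K (j + 2)
          have hy₂nb : ¬ isMissing K a y₂ := by
            rintro ⟨e₂, h21, h23, h2m⟩
            obtain ⟨e₁, h11, h13, h1m⟩ := hsb
            have hmc : (s + e₁) % 2 ^ K = (y₂ + e₂) % 2 ^ K := by
              rw [h1m, h2m]
            rcases lt_trichotomy e₁ e₂ with hlt | heq | hgt
            · have hmc2 : ((y₂ + (e₂ - e₁)) + e₁) % 2 ^ K = (s + e₁) % 2 ^ K := by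
                rw [show y₂ + (e₂ - e₁) + e₁ = y₂ + e₂ by omega]
                exact hmc.symm
              have h' : (y₂ + (e₂ - e₁)) % 2 ^ K = s % 2 ^ K :=
                Nat.ModEq.add_right_cancel' e₁ hmc2
              have hcong : s = (y₂ + (e₂ - e₁)) % 2 ^ K :=
                ((h'.trans (Nat.mod_eq_of_lt hs))).symm
              rcases (by omega : e₂ - e₁ = 1 ∨ e₂ - e₁ = 2) with hdd | hdd
              · rw [hdd] at hcong
                apply (brev_adj1 K y₂ (by omega) hy₂).2
                rw [← hcong, hinvs, hinvy₂]
              · rw [hdd] at hcong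
                apply (brev_adj2 K y₂ hK hy₂).2
                rw [← hcong, hinvs, hinvy₂]
            · have hmc2 : (s + e₁) % 2 ^ K = (y₂ + e₁) % 2 ^ K := by
                rw [show y₂ + e₁ = y₂ + e₂ by omega]
                exact hmc
              have h' : s % 2 ^ K = y₂ % 2 ^ K := Nat.ModEq.add_right_cancel' e₁ hmc2
              have hsy : s = y₂ := by
                rw [← Nat.mod_eq_of_lt hs, ← Nat.mod_eq_of_lt hy₂, h']
              have : j + 1 = j + 2 := by rw [← hinvs, ← hinvy₂, hsy]
              omega
            · have hmc2 : ((s + (e₁ - e₂)) + e₂) % 2 ^ K = (y₂ + e₂) % 2 ^ K := by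
                rw [show s + (e₁ - e₂) + e₂ = s + e₁ by omega]
                exact hmc
              have h' : (s + (e₁ - e₂)) % 2 ^ K = y₂ % 2 ^ K :=
                Nat.ModEq.add_right_cancel' e₂ hmc2
              have hcong : (s + (e₁ - e₂)) % 2 ^ K = y₂ := h'.trans (Nat.mod_eq_of_lt hy₂)
              rcases (by omega : e₁ - e₂ = 1 ∨ e₁ - e₂ = 2) with hdd | hdd
              · rw [hdd] at hcong
                apply (brev_adj1 K s (by omega) hs).1
                rw [hcong, hinvs, hinvy₂]
              · rw [hdd] at hcong
                apply (brev_adj2 K s hK hs).1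
                rw [hcong, hinvs, hinvy₂]
          obtain ⟨e₁, h11, h13, h1m⟩ := hsb
          have hsides : (a % 2 ^ K ≤ r ∧ a % 2 ^ K ≤ y₂) ∨ (r < a % 2 ^ K ∧ y₂ < a % 2 ^ K) := by
            by_cases hstop : 2 ^ K' ≤ s
            · -- s in top half
              obtain ⟨w, hwdef⟩ : ∃ w, s = 2 ^ K' + w := ⟨s - 2 ^ K', by omega⟩
              have hw : w < 2 ^ K' := by omega
              have hbs : brev (K' + 1) s = 2 * brev K' w + 1 := by
                rw [hwdef]
                exact brev_high K' w hw
              have hinvs' : brev (K' + 1) s = j + 1 := by rw [← hKK]; exact hinvs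
              have hj2w : j = 2 * brev K' w := by omega
              have hrw : r = w := by
                have h1 : brev (K' + 1) j = w := by
                  rw [hj2w, brev_succ,
                    show 2 * brev K' w % 2 = 0 by omega,
                    show 2 * brev K' w / 2 = brev K' w by omega,
                    brev_invol K' w hw]
                  ring
                rw [← hinvr, hKK, h1]
              have hy₂lt : y₂ < 2 ^ K' := by
                by_contra hcon
                push_neg at hcon
                have h2 := brev_mod_of_ge K' y₂ hcon (by omega)
                have hinvy₂' : brev (K' + 1) y₂ = j + 2 := by rw [← hKK]; exact hinvy₂
                omega
              have hρcase : a % 2 ^ K = s + e₁ ∨ a % 2 ^ K ≤ 2 := by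
                rcases Nat.lt_or_ge (s + e₁) (2 ^ K) with hc | hc
                · left
                  rw [← h1m, Nat.mod_eq_of_lt hc]
                · right
                  have hm2 : (s + e₁) % 2 ^ K = s + e₁ - 2 ^ K := by
                    rw [Nat.mod_eq_sub_mod hc, Nat.mod_eq_of_lt (by omega)]
                  rw [← h1m, hm2]
                  omega
              rcases hρcase with hv | hv
              · right
                exact ⟨by omega, by omega⟩
              · left
                constructor
                · by_contra hcon
                  push_neg at hcon
                  have := side_lemma K a r hcon hnb
                  omega
                · by_contra hcon
                  push_neg at hcon
                  have := side_lemma K a y₂ hcon hy₂nb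
                  omega
            · -- s in bottom half
              push_neg at hstop
              have hbs : brev (K' + 1) s = 2 * brev K' s := brev_low K' s hstop
              have hinvs' : brev (K' + 1) s = j + 1 := by rw [← hKK]; exact hinvs
              have hrge : 2 ^ K' ≤ r := by
                by_contra hcon
                push_neg at hcon
                have h0 : brev (K' + 1) r % 2 = 0 := brev_mod_of_lt K' r hcon
                have h1 : brev (K' + 1) r = j := by rw [← hKK, ← hjdef]
                omega
              have hy₂val : y₂ = 2 ^ K' + s := by
                have h1 : brev (K' + 1) (j + 2) = 2 ^ K' + brev K' (brev K' s) := by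
                  rw [show j + 2 = 2 * brev K' s + 1 by omega, brev_succ,
                    show (2 * brev K' s + 1) % 2 = 1 by omega,
                    show (2 * brev K' s + 1) / 2 = brev K' s by omega]
                  ring
                rw [hy2def, hKK, h1, brev_invol K' s hstop]
              have hρval : a % 2 ^ K = s + e₁ := by
                rw [← h1m, Nat.mod_eq_of_lt (by omega)]
              left
              constructor
              · by_contra hcon
                push_neg at hcon
                have := side_lemma K a r hcon hnb
                omega
              · omega
          obtain ⟨n₂, hn₂C, hn₂r, hn₂d⟩ := exists_elem K a y₂ hK hy₂ hy₂nb
          have hd₂ : brev (m - K) (n₂ / 2 ^ K) = d := by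
            rcases hsides with ⟨hs1, hs2⟩ | ⟨hs1, hs2⟩
            · rw [hn₂d, if_pos hs2, hddef]
              rcases hdisj with ⟨_, hv⟩ | ⟨hv, _⟩
              · rw [hv]
              · omega
            · rw [hn₂d, if_neg (by omega), hddef]
              rcases hdisj with ⟨hv, _⟩ | ⟨_, hv⟩
              · omega
              · rw [hv]
          have hsplit₂ : brev m n₂ = (j + 2) * 2 ^ (m - K) + d := by
            rw [brev_split K m n₂ hKm, hn₂r, hinvy₂, hd₂]
          have hexp : (j + 2) * 2 ^ (m - K) = j * 2 ^ (m - K) + 2 * 2 ^ (m - K) := by ring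
          refine ⟨brev m n₂, Or.inr ⟨n₂, hn₂C, rfl⟩, ?_, ?_⟩
          · rw [hsplitn, hsplit₂]; omega
          · rw [hsplitn, hsplit₂]; omega
      · obtain ⟨n', hn'C, hn'r, _⟩ := exists_elem K a s hK hs hsb
        have hsplit' : brev m n' = (j + 1) * 2 ^ (m - K) + brev (m - K) (n' / 2 ^ K) := by
          rw [brev_split K m n' hKm, hn'r, hinvs]
        have hd' := brev_lt (m - K) (n' / 2 ^ K)
        have hexp : (j + 1) * 2 ^ (m - K) = j * 2 ^ (m - K) + 2 ^ (m - K) := by ring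
        refine ⟨brev m n', Or.inr ⟨n', hn'C, rfl⟩, ?_, ?_⟩
        · rw [hsplitn, hsplit']; omega
        · rw [hsplitn, hsplit']; omega

/-- For a set `C` of `2^{k+1}−3` consecutive integers in `{0,…,2^m−1}` with
`k ∈ {3,…,m−1}`, every gap of `φ₂(C) ∪ {0,1}` is at most `1/2^k`. -/
theorem radInv_gap_C (m k a : ℕ) (hm : 4 ≤ m) (hk1 : 3 ≤ k) (hkm : k ≤ m - 1)
    (ha : a + (2 ^ (k + 1) - 3) ≤ 2 ^ m) (S : Set ℝ)
    (hS : S = {0, 1} ∪ (fun n => radInv 2 m n) '' {n : ℕ | a ≤ n ∧ n < a + (2 ^ (k + 1) - 3)}) :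
    ∀ t₁ ∈ S, ∀ t₂ ∈ S, t₁ < t₂ → (∀ t ∈ S, ¬(t₁ < t ∧ t < t₂)) →
      t₂ - t₁ ≤ 1 / (2 : ℝ) ^ k := by
  have hK : 4 ≤ k + 1 := by omega
  have hKm : k + 1 ≤ m := by omega
  have h2m : (0:ℝ) < 2 ^ m := by positivity
  intro t₁ ht₁ t₂ ht₂ hlt hgap
  have hmem : ∀ t : ℝ, t ∈ S ↔
      (t = 0 ∨ t = 1 ∨ ∃ n, (a ≤ n ∧ n < a + (2 ^ (k+1) - 3)) ∧ radInv 2 m n = t) := by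
    intro t
    rw [hS]
    simp only [Set.mem_union, Set.mem_insert_iff, Set.mem_singleton_iff, Set.mem_image,
      Set.mem_setOf_eq]
    tauto
  have hle1 : ∀ t ∈ S, t ≤ 1 := by
    intro t ht
    rcases (hmem t).mp ht with rfl | rfl | ⟨n, _, rfl⟩
    · norm_num
    · exact le_refl 1
    · rw [radInv_eq_brev]
      rw [div_le_one h2m]
      have := brev_lt m n
      have : (brev m n : ℝ) < 2 ^ m := by exact_mod_cast this
      linarith
  have ht₁lt1 : t₁ < 1 := lt_of_lt_of_le hlt (hle1 t₂ ht₂)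
  obtain ⟨B, hBcond, hBt⟩ :
      ∃ B : ℕ, (B = 0 ∨ ∃ n, (a ≤ n ∧ n < a + (2 ^ (k+1) - 3)) ∧ brev m n = B) ∧
        t₁ = (B : ℝ) / 2 ^ m := by
    rcases (hmem t₁).mp ht₁ with rfl | rfl | ⟨n, hnC, hval⟩
    · exact ⟨0, Or.inl rfl, by norm_num⟩
    · exact absurd ht₁lt1 (lt_irrefl 1)
    · exact ⟨brev m n, Or.inr ⟨n, hnC, rfl⟩, by rw [← hval, radInv_eq_brev]⟩
  obtain ⟨B', hB'cond, hBB1, hBB2⟩ := key_lemma m (k+1) a hK hKm ha B hBcond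
  have ht'S : ((B' : ℝ) / 2 ^ m) ∈ S := by
    rcases hB'cond with rfl | ⟨n', hn'C, rfl⟩
    · apply (hmem _).mpr
      right; left
      push_cast
      field_simp
    · apply (hmem _).mpr
      right; right
      exact ⟨n', hn'C, radInv_eq_brev m n'⟩
  have hlt' : t₁ < (B' : ℝ) / 2 ^ m := by
    rw [hBt]
    have hc : (B:ℝ) < B' := by exact_mod_cast hBB1
    have := h2m
    rw [div_lt_div_iff₀ h2m h2m]
    nlinarith
  have hub : (B' : ℝ) / 2 ^ m ≤ t₁ + 1 / 2 ^ k := by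
    have hcast : (B' : ℝ) ≤ B + 2 * 2 ^ (m - (k+1)) := by exact_mod_cast hBB2
    have hpow : (2:ℝ) * 2 ^ (m - (k+1)) * 2 ^ k = 2 ^ m := by
      have hnat : 2 * 2 ^ (m - (k+1)) * 2 ^ k = 2 ^ m := by
        have h1 : (2:ℕ) * 2 ^ (m - (k+1)) = 2 ^ (m - k) := by
          rw [← pow_succ']
          congr 1
          omega
        rw [h1, ← pow_add]
        congr 1
        omega
      exact_mod_cast hnat
    rw [hBt, div_add_div _ _ (ne_of_gt h2m) (by positivity : (2:ℝ)^k ≠ 0)]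
    rw [div_le_div_iff₀ h2m (by positivity)]
    have h2k : (0:ℝ) < 2 ^ k := by positivity
    calc (B':ℝ) * (2 ^ m * 2 ^ k)
        ≤ ((B:ℝ) + 2 * 2 ^ (m - (k+1))) * (2 ^ m * 2 ^ k) :=
          mul_le_mul_of_nonneg_right hcast (by positivity)
      _ = ((B:ℝ) * 2 ^ k + 2 ^ m * 1) * 2 ^ m := by rw [← hpow]; ring
  have ht2le : t₂ ≤ (B' : ℝ) / 2 ^ m := by
    by_contra hcon
    push_neg at hcon
    exact hgap _ ht'S ⟨hlt', hcon⟩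
  linarith
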